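/- arXiv:2408.00007 — 3 statements merged into one kernel-verified Lean document; each statement's English description precedes it below -/
import Mathlib

section
/- Let N and m be positive integers with N > 2m and set m* = 2N/(N−2m) and P_{m,N} = ∏_{h=−m}^{m−1}(N+2h). Then the function U_{0,1}(y) = P_{m,N}^{(N−2m)/(4m)} (1/(1+|y|²))^{(N−2m)/2} on ℝ^N is smooth, strictly positive, and satisfies (−Δ)^m U_{0,1}(y) = U_{0,1}(y)^{m*−1} at every point y ∈ ℝ^N, where (−Δ)^m denotes the m-th iterate of the negative Euclidean Laplacian (the negative of the trace of the Hessian). -/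
open Real

/-- The Laplacian of a function on `ℝ^N`: the trace of its Hessian. -/
noncomputable def laplacian {N : ℕ} (f : EuclideanSpace ℝ (Fin N) → ℝ)
    (y : EuclideanSpace ℝ (Fin N)) : ℝ :=
  ∑ i : Fin N, iteratedFDeriv ℝ 2 f y ![EuclideanSpace.single i 1, EuclideanSpace.single i 1]

/-- The m-th iterate of the negative Laplacian `(-Δ)^m`. -/
noncomputable def negLapPow {N : ℕ} (m : ℕ) (f : EuclideanSpace ℝ (Fin N) → ℝ) :
    EuclideanSpace ℝ (Fin N) → ℝ :=
  (fun g => fun y => - laplacian g y)^[m] f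

/-- The constant `P_{m,N} = ∏_{h=-m}^{m-1} (N + 2h)`. -/
noncomputable def Pconst (N m : ℕ) : ℝ :=
  ∏ j ∈ Finset.range (2*m), ((N:ℝ) - 2*m + 2*j)

/-- The standard bubble `U_{0,1}(y) = P_{m,N}^{(N-2m)/(4m)} (1/(1+|y|²))^{(N-2m)/2}`. -/
noncomputable def U01 (N m : ℕ) (y : EuclideanSpace ℝ (Fin N)) : ℝ :=
  Pconst N m ^ (((N:ℝ) - 2*m)/(4*m)) * (1/(1 + ‖y‖^2)) ^ (((N:ℝ) - 2*m)/2)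

open Finset

variable {N : ℕ}

local notation "E" => EuclideanSpace ℝ (Fin N)

noncomputable def Wp (N : ℕ) (p : ℝ) : EuclideanSpace ℝ (Fin N) → ℝ :=
  fun y => (1 + ‖y‖^2) ^ p

lemma one_add_norm_pos (y : E) : (0:ℝ) < 1 + ‖y‖^2 := by positivity

lemma Wp_pos (p : ℝ) (y : E) : 0 < Wp N p y := rpow_pos_of_pos (one_add_norm_pos y) p

lemma Wp_contDiff (p : ℝ) {n : WithTop ℕ∞} : ContDiff ℝ n (Wp N p) := by
  rw [contDiff_iff_contDiffAt]
  intro y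
  exact ((contDiffAt_const (c := (1:ℝ))).add (contDiff_norm_sq ℝ).contDiffAt).rpow_const_of_ne
    (ne_of_gt (one_add_norm_pos y))

lemma hasFDerivAt_Wp (p : ℝ) (y : E) :
    HasFDerivAt (Wp N p) ((2 * p * (1 + ‖y‖^2) ^ (p-1)) • (innerSL ℝ y)) y := by
  have h1 : HasFDerivAt (fun y : E => 1 + ‖y‖^2) (2 • (innerSL ℝ y)) y := by
    simpa using ((hasStrictFDerivAt_norm_sq y).hasFDerivAt).const_add 1
  have h2 := h1.rpow_const (p := p) (Or.inl (ne_of_gt (one_add_norm_pos y)))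
  have key : ((2 * p * (1 + ‖y‖^2) ^ (p-1)) • (innerSL ℝ y) : EuclideanSpace ℝ (Fin N) →L[ℝ] ℝ)
      = (p * (1 + ‖y‖^2) ^ (p-1)) • 2 • (innerSL ℝ y) := by
    ext v
    simp [two_smul]
    ring
  rw [key]
  exact h2

lemma fderiv_Wp (p : ℝ) :
    fderiv ℝ (Wp N p) = fun y => (2 * p * (1 + ‖y‖^2) ^ (p-1)) • (innerSL ℝ y) :=
  funext fun y => (hasFDerivAt_Wp p y).fderiv

lemma d2_Wp (p : ℝ) (y : E) (i : Fin N) :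
    iteratedFDeriv ℝ 2 (Wp N p) y ![EuclideanSpace.single i 1, EuclideanSpace.single i 1]
      = 2*p*(1 + ‖y‖^2)^(p-1) + 2*p*(2*(p-1)*(1 + ‖y‖^2)^(p-1-1)) * (y i)^2 := by
  rw [iteratedFDeriv_two_apply, fderiv_Wp]
  have hc : HasFDerivAt (fun y : EuclideanSpace ℝ (Fin N) => 2 * p * (1 + ‖y‖^2) ^ (p-1))
      ((2*p) • ((2 * (p-1) * (1 + ‖y‖^2) ^ (p-1-1)) • (innerSL ℝ y))) y :=
    (hasFDerivAt_Wp (p-1) y).const_mul (2*p)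
  have hf : HasFDerivAt (fun y : EuclideanSpace ℝ (Fin N) => innerSL ℝ y) (innerSL ℝ) y :=
    ContinuousLinearMap.hasFDerivAt _
  have hF := hc.smul hf
  rw [HasFDerivAt.fderiv (f := fun y : E => (2 * p * (1 + ‖y‖^2) ^ (p-1)) • (innerSL ℝ y)) hF]
  simp [ContinuousLinearMap.smulRight_apply, innerSL_apply_apply, EuclideanSpace.inner_single_left,
    EuclideanSpace.inner_single_right, EuclideanSpace.single_apply, real_inner_comm]
  rw [show ((innerSL ℝ) (EuclideanSpace.single i (1:ℝ) : E)) (EuclideanSpace.single i 1) = 1 from by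
    rw [innerSL_apply_apply]; simp]
  ring

lemma sum_coord_sq (y : E) : ∑ i : Fin N, (y i)^2 = ‖y‖^2 := by
  rw [EuclideanSpace.norm_sq_eq]
  simp [Real.norm_eq_abs, sq_abs]

lemma laplacian_Wp (p : ℝ) (y : E) :
    laplacian (Wp N p) y
      = (2*p*N + 4*p*(p-1)) * Wp N (p-1) y - 4*p*(p-1) * Wp N (p-2) y := by
  unfold laplacian
  simp only [d2_Wp]
  rw [Finset.sum_add_distrib, Finset.sum_const, ← Finset.mul_sum, sum_coord_sq]
  have hpos := one_add_norm_pos y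
  have h1 : (1 + ‖y‖^2 : ℝ) ^ (p-1-1) * (1 + ‖y‖^2) = (1 + ‖y‖^2) ^ (p-1) := by
    rw [← Real.rpow_add_one (ne_of_gt hpos) (p-1-1)]
    ring_nf
  have h2 : (1 + ‖y‖^2 : ℝ) ^ (p-1-1) = (1 + ‖y‖^2) ^ (p-2) := by ring_nf
  unfold Wp
  simp only [Finset.card_univ, Fintype.card_fin, nsmul_eq_mul]
  linear_combination (4*p*(p-1)) * h1 - (4*p*(p-1)) * h2

noncomputable def bco (m k j : ℕ) : ℝ :=
  (k.choose j : ℝ) * ∏ i ∈ Finset.range (k - j), ((m:ℝ) - 1 - j - i)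

lemma bco_diag (m k : ℕ) : bco m k k = 1 := by simp [bco]

lemma bco_gt (m k j : ℕ) (h : k < j) : bco m k j = 0 := by
  simp [bco, Nat.choose_eq_zero_of_lt h]

lemma bco_rec0 (m k : ℕ) : bco m (k+1) 0 = ((m:ℝ) - 1 - k) * bco m k 0 := by
  simp only [bco, Nat.choose_zero_right, Nat.sub_zero, Finset.prod_range_succ]
  push_cast
  ring

lemma bco_recS (m k j : ℕ) :
    bco m (k+1) (j+1)
      = ((m:ℝ) - 1 - k - (j+1)) * bco m k (j+1) + bco m k j := by
  rcases lt_trichotomy j k with h | rfl | h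
  · obtain ⟨d, rfl⟩ : ∃ d, k = j + 1 + d := ⟨k - (j+1), by omega⟩
    have e1 : j + 1 + d + 1 - (j + 1) = d + 1 := by omega
    have e2 : j + 1 + d - (j + 1) = d := by omega
    have e3 : j + 1 + d - j = d + 1 := by omega
    simp only [bco, e1, e2, e3]
    set Q : ℝ := ∏ i ∈ Finset.range d, ((m:ℝ) - 1 - (j+1) - i) with hQ
    have h1 : ∏ i ∈ Finset.range (d+1), ((m:ℝ) - 1 - ((j+1):ℕ) - i)
        = Q * ((m:ℝ) - 2 - j - d) := by
      rw [Finset.prod_range_succ, hQ]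
      congr 1
      · exact Finset.prod_congr rfl fun i _ => by push_cast; ring
      · push_cast; ring
    have h2 : ∏ i ∈ Finset.range (d+1), ((m:ℝ) - 1 - j - i) = Q * ((m:ℝ) - 1 - j) := by
      rw [Finset.prod_range_succ']
      congr 1
      · exact Finset.prod_congr rfl fun i _ => by push_cast; ring
      · push_cast; ring
    rw [show ((j:ℕ)+1+d+1 : ℕ) = (j+1+d)+1 from rfl, Nat.choose_succ_succ]
    have hch : (((j+1+d).choose (j+1)) : ℝ) * ((j:ℝ)+1) = (((j+1+d).choose j) : ℝ) * ((d:ℝ)+1) := by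
      have := Nat.choose_succ_right_eq (j+1+d) j
      have h4 : j + 1 + d - j = d + 1 := by omega
      rw [h4] at this
      exact_mod_cast this
    rw [h1, h2]
    push_cast
    linear_combination Q * hch
  · simp [bco, Nat.choose_succ_self]
  · rw [bco_gt m (k+1) (j+1) (by omega), bco_gt m k (j+1) (by omega), bco_gt m k j h]
    ring

noncomputable def aco (N m k j : ℕ) : ℝ :=
  4^k * (∏ i ∈ Finset.range (k + j), (((N:ℝ) - 2*m)/2 + i)) * bco m k j

lemma aco_gt (N m k j : ℕ) (h : k < j) : aco N m k j = 0 := by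
  simp [aco, bco_gt m k j h]

lemma aco_rec0 (N m k : ℕ) :
    aco N m (k+1) 0
      = (2*(((N:ℝ)-2*m)/2 + k)*((N:ℝ) - 2*(((N:ℝ)-2*m)/2 + k) - 2)) * aco N m k 0 := by
  simp only [aco, bco_rec0, Nat.add_zero, Finset.prod_range_succ]
  push_cast
  ring

lemma aco_recS (N m k j : ℕ) :
    aco N m (k+1) (j+1)
      = (2*(((N:ℝ)-2*m)/2 + k + j + 1)*((N:ℝ) - 2*(((N:ℝ)-2*m)/2 + k + j + 1) - 2))
          * aco N m k (j+1)
        + (4*(((N:ℝ)-2*m)/2 + k + j)*(((N:ℝ)-2*m)/2 + k + j + 1)) * aco N m k j := by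
  simp only [aco, bco_recS]
  rw [show (k+1) + (j+1) = ((k+j)+1)+1 from by omega,
    show k + (j+1) = (k+j)+1 from by omega,
    Finset.prod_range_succ, Finset.prod_range_succ]
  push_cast
  ring

lemma iteratedFDeriv2_sum {ι : Type} (s : Finset ι) (c : ι → ℝ) (p : ι → ℝ)
    (x : E) :
    iteratedFDeriv ℝ 2 (fun y => ∑ j ∈ s, c j * Wp N (p j) y) x
      = ∑ j ∈ s, c j • iteratedFDeriv ℝ 2 (Wp N (p j)) x := by
  classical
  induction s using Finset.induction with
  | empty => simp [iteratedFDeriv_zero_fun]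
  | insert a s h ih =>
    have hW : ∀ q : ℝ, ContDiff ℝ (2:ℕ) (Wp N q) := fun q =>
      Wp_contDiff q
    have hsum : ContDiff ℝ (2:ℕ) (fun y => ∑ j ∈ s, c j * Wp N (p j) y) :=
      ContDiff.sum fun j _ => (hW (p j)).const_smul (c j)
    simp only [Finset.sum_insert h]
    rw [iteratedFDeriv_add_apply' (f := fun y => c a * Wp N (p a) y)
      (g := fun y => ∑ j ∈ s, c j * Wp N (p j) y)
      (by exact ((hW (p a)).const_smul (c a)).contDiffAt) hsum.contDiffAt, ih]
    congr 1
    have := iteratedFDeriv_const_smul_apply' (f := Wp N (p a)) (a := c a) (x := x)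
      (i := 2) (hW (p a)).contDiffAt
    simpa [smul_eq_mul] using this

lemma laplacian_sum {ι : Type} (s : Finset ι) (c : ι → ℝ) (p : ι → ℝ) (y : E) :
    laplacian (fun y => ∑ j ∈ s, c j * Wp N (p j) y) y
      = ∑ j ∈ s, c j * laplacian (Wp N (p j)) y := by
  unfold laplacian
  simp only [iteratedFDeriv2_sum, ContinuousMultilinearMap.sum_apply,
    ContinuousMultilinearMap.smul_apply, smul_eq_mul]
  rw [Finset.sum_comm]
  simp [Finset.mul_sum]

noncomputable def Aco (N : ℕ) (s : ℝ) : ℝ := 2*s*((N:ℝ) - 2*s - 2)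
noncomputable def Bco (s : ℝ) : ℝ := 4*s*(s+1)

lemma negLap_Wl (N m l : ℕ) (y : EuclideanSpace ℝ (Fin N)) :
    - laplacian (Wp N (-(((N:ℝ)-2*m)/2 + (l:ℝ)))) y
      = Aco N (((N:ℝ)-2*m)/2 + (l:ℝ)) * Wp N (-(((N:ℝ)-2*m)/2 + ((l+1 : ℕ):ℝ))) y
        + Bco (((N:ℝ)-2*m)/2 + (l:ℝ)) * Wp N (-(((N:ℝ)-2*m)/2 + ((l+2 : ℕ):ℝ))) y := by
  rw [laplacian_Wp]
  unfold Aco Bco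
  push_cast
  ring_nf

lemma negLapPow_sum (N m : ℕ) (C : ℝ) (k : ℕ) :
    negLapPow k (fun y : EuclideanSpace ℝ (Fin N) => C * Wp N (-(((N:ℝ)-2*m)/2)) y)
      = fun y => ∑ j ∈ Finset.range (k+1),
          C * aco N m k j * Wp N (-(((N:ℝ)-2*m)/2 + ((k+j : ℕ):ℝ))) y := by
  induction k with
  | zero =>
    funext y
    simp [negLapPow, aco, bco]
  | succ k ih =>
    have hstep : negLapPow (k+1) (fun y : EuclideanSpace ℝ (Fin N) => C * Wp N (-(((N:ℝ)-2*m)/2)) y)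
        = fun y => - laplacian (negLapPow k (fun y : EuclideanSpace ℝ (Fin N) => C * Wp N (-(((N:ℝ)-2*m)/2)) y)) y := by
      unfold negLapPow
      rw [Function.iterate_succ_apply']
    rw [hstep, ih]
    funext y
    rw [laplacian_sum (Finset.range (k+1)) (fun j => C * aco N m k j)
        (fun j => -(((N:ℝ)-2*m)/2 + ((k+j : ℕ):ℝ))) y]
    rw [← Finset.sum_neg_distrib]
    have hterm : ∀ j ∈ Finset.range (k+1),
        -(C * aco N m k j * laplacian (Wp N (-(((N:ℝ)-2*m)/2 + ((k+j:ℕ):ℝ)))) y)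
          = C * (Aco N (((N:ℝ)-2*m)/2 + ((k+j:ℕ):ℝ)) * aco N m k j)
              * Wp N (-(((N:ℝ)-2*m)/2 + ((k+j+1:ℕ):ℝ))) y
            + C * (Bco (((N:ℝ)-2*m)/2 + ((k+j:ℕ):ℝ)) * aco N m k j)
              * Wp N (-(((N:ℝ)-2*m)/2 + ((k+j+2:ℕ):ℝ))) y := by
      intro j _
      have h := negLap_Wl N m (k+j) y
      calc -(C * aco N m k j * laplacian (Wp N (-(((N:ℝ)-2*m)/2 + ((k+j:ℕ):ℝ)))) y)
          = C * aco N m k j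
              * (- laplacian (Wp N (-(((N:ℝ)-2*m)/2 + ((k+j:ℕ):ℝ)))) y) := by ring
        _ = _ := by rw [h]; ring
    rw [Finset.sum_congr rfl hterm, Finset.sum_add_distrib]
    rw [Finset.sum_range_succ'
      (fun j => C * aco N m (k+1) j * Wp N (-(((N:ℝ)-2*m)/2 + ((k+1+j : ℕ):ℝ))) y) (k+1)]
    have hrec : ∀ j ∈ Finset.range (k+1),
        C * aco N m (k+1) (j+1) * Wp N (-(((N:ℝ)-2*m)/2 + ((k+1+(j+1) : ℕ):ℝ))) y
          = C * (Aco N (((N:ℝ)-2*m)/2 + ((k+j:ℕ):ℝ) + 1) * aco N m k (j+1))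
              * Wp N (-(((N:ℝ)-2*m)/2 + ((k+j+2:ℕ):ℝ))) y
            + C * (Bco (((N:ℝ)-2*m)/2 + ((k+j:ℕ):ℝ)) * aco N m k j)
              * Wp N (-(((N:ℝ)-2*m)/2 + ((k+j+2:ℕ):ℝ))) y := by
      intro j _
      rw [aco_recS]
      rw [show ((k+1+(j+1) : ℕ):ℝ) = ((k+j+2:ℕ):ℝ) from by push_cast; ring]
      unfold Aco Bco
      push_cast
      ring
    rw [Finset.sum_congr rfl hrec, Finset.sum_add_distrib, aco_rec0]
    have hA : (∑ j ∈ Finset.range (k+1),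
          C * (Aco N (((N:ℝ)-2*m)/2 + ((k+j:ℕ):ℝ)) * aco N m k j)
            * Wp N (-(((N:ℝ)-2*m)/2 + ((k+j+1:ℕ):ℝ))) y)
        = (∑ j ∈ Finset.range (k+1),
            C * (Aco N (((N:ℝ)-2*m)/2 + ((k+j:ℕ):ℝ) + 1) * aco N m k (j+1))
              * Wp N (-(((N:ℝ)-2*m)/2 + ((k+j+2:ℕ):ℝ))) y)
          + C * (2*(((N:ℝ)-2*m)/2 + (k:ℝ))*((N:ℝ) - 2*(((N:ℝ)-2*m)/2 + (k:ℝ)) - 2) * aco N m k 0)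
              * Wp N (-(((N:ℝ)-2*m)/2 + ((k+1+0:ℕ):ℝ))) y := by
      rw [Finset.sum_range_succ'
        (fun j => C * (Aco N (((N:ℝ)-2*m)/2 + ((k+j:ℕ):ℝ)) * aco N m k j)
          * Wp N (-(((N:ℝ)-2*m)/2 + ((k+j+1:ℕ):ℝ))) y) k]
      rw [Finset.sum_range_succ
        (fun j => C * (Aco N (((N:ℝ)-2*m)/2 + ((k+j:ℕ):ℝ) + 1) * aco N m k (j+1))
          * Wp N (-(((N:ℝ)-2*m)/2 + ((k+j+2:ℕ):ℝ))) y) k]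
      rw [aco_gt N m k (k+1) (by omega)]
      have hcg : ∀ j ∈ Finset.range k,
          C * (Aco N (((N:ℝ)-2*m)/2 + ((k+(j+1):ℕ):ℝ)) * aco N m k (j+1))
            * Wp N (-(((N:ℝ)-2*m)/2 + ((k+(j+1)+1:ℕ):ℝ))) y
          = C * (Aco N (((N:ℝ)-2*m)/2 + ((k+j:ℕ):ℝ) + 1) * aco N m k (j+1))
            * Wp N (-(((N:ℝ)-2*m)/2 + ((k+j+2:ℕ):ℝ))) y := by
        intro j _
        rw [show ((k+(j+1)+1 : ℕ):ℝ) = ((k+j+2:ℕ):ℝ) from by push_cast; ring]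
        rw [show ((k+(j+1) : ℕ):ℝ) = ((k+j:ℕ):ℝ) + 1 from by push_cast; ring, ← add_assoc]
      rw [Finset.sum_congr rfl hcg]
      simp only [mul_zero, zero_mul, add_zero]
      congr 1
    rw [hA]
    push_cast
    ring

lemma bco_final (m j : ℕ) (hj : j < m) : bco m m j = 0 := by
  unfold bco
  rw [Finset.prod_eq_zero (i := m - 1 - j) (Finset.mem_range.mpr (by omega))]
  · ring
  · have : ((m - 1 - j : ℕ) : ℝ) = (m:ℝ) - 1 - j := by
      push_cast [Nat.cast_sub (by omega : j ≤ m - 1), Nat.cast_sub (by omega : 1 ≤ m)]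
      ring
    rw [this]; ring

lemma aco_final (N m : ℕ) : aco N m m m = Pconst N m := by
  unfold aco Pconst
  rw [bco_diag, mul_one]
  rw [show m + m = 2*m from by omega]
  rw [show (4:ℝ)^m = ∏ _j ∈ Finset.range (2*m), (2:ℝ) from by
    rw [Finset.prod_const, Finset.card_range, pow_mul]; norm_num]
  rw [← Finset.prod_mul_distrib]
  exact Finset.prod_congr rfl fun j _ => by ring

lemma Pconst_pos (N m : ℕ) (hN : 2*m < N) : 0 < Pconst N m := by
  unfold Pconst
  apply Finset.prod_pos
  intro j _
  have h : (2*m:ℝ) < (N:ℝ) := by exact_mod_cast hN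
  have : (0:ℝ) ≤ (j:ℝ) := Nat.cast_nonneg j
  linarith

lemma U01_eq (N m : ℕ) : U01 N m = fun y =>
    (Pconst N m ^ (((N:ℝ) - 2*m)/(4*m))) * Wp N (-(((N:ℝ)-2*m)/2)) y := by
  funext y
  unfold U01 Wp
  congr 1
  rw [one_div, Real.inv_rpow (le_of_lt (one_add_norm_pos y)),
    ← Real.rpow_neg (le_of_lt (one_add_norm_pos y))]

theorem stmt0 (N m : ℕ) (hm : 0 < m) (hN : 2*m < N) :
    ContDiff ℝ (⊤ : ℕ∞) (U01 N m) ∧ (∀ y, 0 < U01 N m y) ∧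
      ∀ y, negLapPow m (U01 N m) y = U01 N m y ^ (2*(N:ℝ)/((N:ℝ) - 2*m) - 1) := by
  have hPc := Pconst_pos N m hN
  have hm0 : ((m:ℝ)) ≠ 0 := by positivity
  have hNm : ((N:ℝ)) - 2*m ≠ 0 := by
    have : (2*m:ℝ) < (N:ℝ) := by exact_mod_cast hN
    linarith
  refine ⟨?_, ?_, ?_⟩
  · rw [U01_eq]
    exact contDiff_const.mul (Wp_contDiff _)
  · intro y
    rw [U01_eq]
    exact mul_pos (Real.rpow_pos_of_pos hPc _) (Wp_pos _ y)
  · intro y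
    rw [U01_eq, negLapPow_sum N m _ m]
    simp only []
    rw [Finset.sum_eq_single_of_mem m (Finset.self_mem_range_succ m) ?side]
    case side =>
      intro j hj hne
      have hjm : j < m := by
        have := Finset.mem_range.mp hj
        omega
      rw [show aco N m m j = 0 from by unfold aco; rw [bco_final m j hjm, mul_zero]]
      ring
    rw [aco_final]
    -- now : Pc^e * Pc * Wp N (-(S + ↑(m+m))) y = (Pc^e * Wp N (-S) y) ^ c
    have hy := one_add_norm_pos y
    unfold Wp
    rw [Real.mul_rpow (le_of_lt (Real.rpow_pos_of_pos hPc _))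
      (le_of_lt (Real.rpow_pos_of_pos hy _))]
    rw [← Real.rpow_mul (le_of_lt hPc), ← Real.rpow_mul (le_of_lt hy)]
    have g1 : ((N:ℝ)-2*m)/(4*m) * (2*(N:ℝ)/((N:ℝ)-2*m) - 1) = ((N:ℝ)-2*m)/(4*m) + 1 := by
      field_simp
      ring
    have g2 : (-(((N:ℝ)-2*m)/2)) * (2*(N:ℝ)/((N:ℝ)-2*m) - 1)
        = -(((N:ℝ)-2*m)/2 + ((m+m:ℕ):ℝ)) := by
      push_cast
      field_simp
      ring
    rw [g1, g2, Real.rpow_add hPc, Real.rpow_one]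
end

section
/- For every real s > 1, the limit lim_{k→∞} k^{−s} ∑_{j=1}^{k−1} (sin(jπ/k))^{−s} = 2 π^{−s} ∑_{n=1}^{∞} n^{−s} holds, where the sum on the right is the (convergent) series defining the Riemann zeta value ζ(s). -/
open Real Filter Topology

noncomputable def trm (s : ℝ) (k j : ℕ) : ℝ :=
  (k:ℝ) ^ (-s) * Real.sin ((j:ℝ) * Real.pi / k) ^ (-s)

lemma trm_nonneg (s : ℝ) (k j : ℕ) (hj : j ≤ k) : 0 ≤ trm s k j := by
  unfold trm
  have h0 : (0:ℝ) ≤ (j:ℝ) * Real.pi / k := by positivity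
  have h1 : (j:ℝ) * Real.pi / k ≤ Real.pi := by
    rcases Nat.eq_zero_or_pos k with hk | hk
    · simp [hk, Real.pi_pos.le]
    · rw [div_le_iff₀ (by exact_mod_cast hk)]
      have : (j:ℝ) ≤ k := by exact_mod_cast hj
      nlinarith [Real.pi_pos]
  have := Real.sin_nonneg_of_nonneg_of_le_pi h0 h1
  positivity

lemma trm_reflect (s : ℝ) (k j : ℕ) (hj : j ≤ k) (hk : 0 < k) :
    trm s k (k - j) = trm s k j := by
  unfold trm
  congr 2
  have hc : ((k - j : ℕ):ℝ) = (k:ℝ) - j := by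
    push_cast [hj]; ring
  have hk' : (k:ℝ) ≠ 0 := by exact_mod_cast hk.ne'
  rw [hc]
  have : ((k:ℝ) - j) * Real.pi / k = Real.pi - (j:ℝ) * Real.pi / k := by
    field_simp
  rw [this, Real.sin_pi_sub]

lemma trm_tendsto (s : ℝ) (j : ℕ) (hj : 1 ≤ j) :
    Tendsto (fun k : ℕ => trm s k j) atTop (𝓝 (((j:ℝ) * Real.pi) ^ (-s))) := by
  have hj0 : (0:ℝ) < j := by exact_mod_cast hj
  have hjpi : 0 < (j:ℝ) * Real.pi := by positivity
  -- sin y / y → 1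
  have hslope : Tendsto (fun y : ℝ => Real.sin y / y) (nhdsWithin 0 {(0:ℝ)}ᶜ) (𝓝 1) := by
    have h := Real.hasDerivAt_sin 0
    rw [hasDerivAt_iff_tendsto_slope] at h
    simp only [Real.cos_zero] at h
    refine h.congr (fun y => ?_)
    simp [slope_def_field, div_eq_inv_mul]
  -- jπ/k → 0 within ≠ 0
  have hx : Tendsto (fun k : ℕ => (j:ℝ) * Real.pi / k) atTop (nhdsWithin 0 {(0:ℝ)}ᶜ) := by
    apply tendsto_nhdsWithin_of_tendsto_nhds_of_eventually_within
    · have h1 : Tendsto (fun k : ℕ => ((k:ℝ))⁻¹) atTop (𝓝 0) :=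
        tendsto_inv_atTop_zero.comp tendsto_natCast_atTop_atTop
      have := h1.const_mul ((j:ℝ) * Real.pi)
      simpa [div_eq_mul_inv] using this
    · filter_upwards [eventually_gt_atTop 0] with k hk
      have : (0:ℝ) < (j:ℝ) * Real.pi / k := by
        have : (0:ℝ) < k := by exact_mod_cast hk
        positivity
      exact this.ne'
  have h1 : Tendsto (fun k : ℕ => (k:ℝ) * Real.sin ((j:ℝ) * Real.pi / k)) atTop
      (𝓝 ((j:ℝ) * Real.pi)) := by
    have h2 := ((hslope.comp hx).const_mul ((j:ℝ) * Real.pi))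
    rw [mul_one] at h2
    refine h2.congr' ?_
    filter_upwards [eventually_gt_atTop 0] with k hk
    have hk' : (k:ℝ) ≠ 0 := by
      have : (0:ℝ) < k := by exact_mod_cast hk
      exact this.ne'
    simp only [Function.comp]
    field_simp
  have hcont : ContinuousAt (fun x : ℝ => x ^ (-s)) ((j:ℝ) * Real.pi) :=
    Real.continuousAt_rpow_const _ _ (Or.inl hjpi.ne')
  have h3 := hcont.tendsto.comp h1
  refine h3.congr' ?_
  filter_upwards [eventually_gt_atTop j] with k hk
  have hk0 : (0:ℝ) < k := by
    have : 0 < k := lt_of_le_of_lt (Nat.zero_le j) hk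
    exact_mod_cast this
  have hs0 : (0:ℝ) ≤ Real.sin ((j:ℝ) * Real.pi / k) := by
    apply Real.sin_nonneg_of_nonneg_of_le_pi
    · positivity
    · rw [div_le_iff₀ hk0]
      have : (j:ℝ) ≤ k := by exact_mod_cast hk.le
      nlinarith [Real.pi_pos]
  simp only [Function.comp]
  rw [Real.mul_rpow hk0.le hs0]
  rfl

lemma trm_le (s : ℝ) (hs0 : 0 < s) (k j : ℕ) (hj : 1 ≤ j) (h : 2 * j < k) :
    trm s k j ≤ ((2:ℝ) * j) ^ (-s) := by
  have hk0 : (0:ℝ) < k := by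
    have : 0 < k := by omega
    exact_mod_cast this
  have hj0 : (0:ℝ) < j := by exact_mod_cast hj
  have hx0 : (0:ℝ) < (j:ℝ) * Real.pi / k := by positivity
  have hx2 : (j:ℝ) * Real.pi / k ≤ Real.pi / 2 := by
    rw [div_le_div_iff₀ hk0 two_pos]
    have : (2:ℝ) * j ≤ k := by exact_mod_cast h.le
    nlinarith [Real.pi_pos]
  have hsin : (2:ℝ) * j / k ≤ Real.sin ((j:ℝ) * Real.pi / k) := by
    have := Real.mul_le_sin hx0.le hx2
    have hpi : Real.pi ≠ 0 := Real.pi_ne_zero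
    calc (2:ℝ) * j / k = 2 / Real.pi * ((j:ℝ) * Real.pi / k) := by
          field_simp
    _ ≤ Real.sin ((j:ℝ) * Real.pi / k) := this
  have h2jk : (0:ℝ) < 2 * j / k := by positivity
  have h1 : Real.sin ((j:ℝ) * Real.pi / k) ^ (-s) ≤ ((2:ℝ) * j / k) ^ (-s) :=
    Real.rpow_le_rpow_of_nonpos h2jk hsin (neg_nonpos.mpr hs0.le)
  have h2 : trm s k j ≤ (k:ℝ) ^ (-s) * ((2:ℝ) * j / k) ^ (-s) := by
    unfold trm
    exact mul_le_mul_of_nonneg_left h1 (Real.rpow_nonneg hk0.le _)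
  calc trm s k j ≤ (k:ℝ) ^ (-s) * ((2:ℝ) * j / k) ^ (-s) := h2
  _ = ((k:ℝ) * ((2:ℝ) * j / k)) ^ (-s) := (Real.mul_rpow hk0.le h2jk.le).symm
  _ = ((2:ℝ) * j) ^ (-s) := by
      congr 1
      field_simp

theorem stmt13 (s : ℝ) (hs : 1 < s) :
    Filter.Tendsto (fun k : ℕ =>
        (k:ℝ) ^ (-s) * ∑ j ∈ Finset.Icc 1 (k-1), Real.sin ((j:ℝ) * Real.pi / k) ^ (-s))
      Filter.atTop
      (nhds (2 * Real.pi ^ (-s) * ∑' n : ℕ, ((n:ℝ)+1) ^ (-s))) := by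
  classical
  have hs0 : (0:ℝ) < s := lt_trans one_pos hs
  set f : ℕ → ℕ → ℝ := fun k n => if 2 * (n + 1) < k then trm s k (n + 1) else 0 with hf
  set M : ℕ → ℝ := fun k =>
    ∑ j ∈ (Finset.Icc 1 (k-1)).filter (fun j => 2 * j = k), trm s k j with hM
  -- the function under study equals 2 * tsum f + M
  have key : ∀ k : ℕ,
      (k:ℝ) ^ (-s) * ∑ j ∈ Finset.Icc 1 (k-1), Real.sin ((j:ℝ) * Real.pi / k) ^ (-s)
        = 2 * ∑' n, f k n + M k := by
    intro k
    have hmul : (k:ℝ) ^ (-s) * ∑ j ∈ Finset.Icc 1 (k-1), Real.sin ((j:ℝ) * Real.pi / k) ^ (-s)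
        = ∑ j ∈ Finset.Icc 1 (k-1), trm s k j := by
      rw [Finset.mul_sum]; rfl
    -- tsum f k = sum over filter (2j<k)
    have htsum : ∑' n, f k n
        = ∑ j ∈ (Finset.Icc 1 (k-1)).filter (fun j => 2 * j < k), trm s k j := by
      rw [tsum_eq_sum (s := Finset.range k)
        (by intro n hn; simp only [Finset.mem_range, not_lt] at hn
            simp only [hf, if_neg (show ¬ 2 * (n + 1) < k by omega)])]
      rw [show (∑ n ∈ Finset.range k, f k n)
          = ∑ n ∈ (Finset.range k).filter (fun n => 2 * (n+1) < k), trm s k (n+1) by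
        simp only [hf]
        rw [Finset.sum_filter]]
      refine Finset.sum_nbij' (fun n => n + 1) (fun j => j - 1) ?_ ?_ ?_ ?_ ?_
      · intro a ha
        simp only [Finset.mem_filter, Finset.mem_range] at ha
        simp only [Finset.mem_filter, Finset.mem_Icc]
        omega
      · intro a ha
        simp only [Finset.mem_filter, Finset.mem_Icc] at ha
        simp only [Finset.mem_filter, Finset.mem_range]
        omega
      · intro a _; omega
      · intro a ha
        simp only [Finset.mem_filter, Finset.mem_Icc] at ha
        omega
      · intro a _; rfl
    -- split the sum
    rw [hmul, htsum]
    rw [← Finset.sum_filter_add_sum_filter_not (Finset.Icc 1 (k-1)) (fun j => 2 * j < k)]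
    have hsplit2 : ∑ j ∈ (Finset.Icc 1 (k-1)).filter (fun j => ¬ 2 * j < k), trm s k j
        = M k + ∑ j ∈ (Finset.Icc 1 (k-1)).filter (fun j => k < 2 * j), trm s k j := by
      rw [hM]
      rw [← Finset.sum_filter_add_sum_filter_not
        ((Finset.Icc 1 (k-1)).filter (fun j => ¬ 2 * j < k)) (fun j => 2 * j = k)]
      congr 1
      · congr 1
        rw [Finset.filter_filter]
        apply Finset.filter_congr
        intro x hx
        simp only [Finset.mem_Icc] at hx
        constructor
        · rintro ⟨_, h2⟩; exact h2
        · intro h2; exact ⟨by omega, h2⟩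
      · congr 1
        rw [Finset.filter_filter]
        apply Finset.filter_congr
        intro x hx
        simp only [Finset.mem_Icc] at hx
        omega
    rw [hsplit2]
    have hrefl : ∑ j ∈ (Finset.Icc 1 (k-1)).filter (fun j => k < 2 * j), trm s k j
        = ∑ j ∈ (Finset.Icc 1 (k-1)).filter (fun j => 2 * j < k), trm s k j := by
      refine Finset.sum_nbij' (fun j => k - j) (fun j => k - j) ?_ ?_ ?_ ?_ ?_
      · intro a ha
        simp only [Finset.mem_filter, Finset.mem_Icc] at ha ⊢
        omega
      · intro a ha
        simp only [Finset.mem_filter, Finset.mem_Icc] at ha ⊢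
        omega
      · intro a ha
        simp only [Finset.mem_filter, Finset.mem_Icc] at ha
        omega
      · intro a ha
        simp only [Finset.mem_filter, Finset.mem_Icc] at ha
        omega
      · intro a ha
        simp only [Finset.mem_filter, Finset.mem_Icc] at ha
        exact (trm_reflect s k a (by omega) (by omega)).symm
    rw [hrefl]
    ring
  -- limit of tsum f
  have hsum1 : Summable (fun n : ℕ => ((n:ℝ)+1) ^ (-s)) := by
    have h1 : Summable (fun n : ℕ => ((n:ℝ)) ^ (-s)) :=
      Real.summable_nat_rpow.mpr (by linarith)
    have h2 := (summable_nat_add_iff 1).mpr h1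
    refine h2.congr fun n => ?_
    push_cast
    ring_nf
  have hbound_sum : Summable (fun n : ℕ => ((2:ℝ) * ((n:ℝ)+1)) ^ (-s)) := by
    have heq : ∀ n : ℕ, ((2:ℝ) * ((n:ℝ)+1)) ^ (-s) = (2:ℝ) ^ (-s) * ((n:ℝ)+1) ^ (-s) :=
      fun n => Real.mul_rpow (by norm_num) (by positivity)
    exact (hsum1.mul_left ((2:ℝ) ^ (-s))).congr fun n => (heq n).symm
  have hG : Tendsto (fun k => ∑' n, f k n) atTop
      (𝓝 (∑' n : ℕ, (((n:ℝ)+1) * Real.pi) ^ (-s))) := by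
    apply tendsto_tsum_of_dominated_convergence
      (bound := fun n : ℕ => ((2:ℝ) * ((n:ℝ)+1)) ^ (-s)) hbound_sum
    · intro n
      have h1 := trm_tendsto s (n+1) (by omega)
      have hcast : (((n+1:ℕ)):ℝ) = (n:ℝ)+1 := by push_cast; ring
      rw [hcast] at h1
      refine h1.congr' ?_
      filter_upwards [eventually_gt_atTop (2*(n+1))] with k hk
      simp only [hf, if_pos hk]
    · refine Eventually.of_forall fun k => fun n => ?_
      by_cases h : 2 * (n+1) < k
      · simp only [hf, if_pos h]
        rw [Real.norm_eq_abs, abs_of_nonneg (trm_nonneg s k (n+1) (by omega))]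
        have := trm_le s hs0 k (n+1) (by omega) h
        have hcast : (((n+1:ℕ)):ℝ) = (n:ℝ)+1 := by push_cast; ring
        rwa [hcast] at this
      · simp only [hf, if_neg h, norm_zero]
        positivity
  -- limit of M
  have hMle : ∀ k : ℕ, M k ≤ (k:ℝ) ^ (-s) ∧ 0 ≤ M k := by
    intro k
    by_cases h : 2 ≤ k ∧ 2 * (k/2) = k
    · have hset : (Finset.Icc 1 (k-1)).filter (fun j => 2 * j = k) = {k/2} := by
        ext j
        simp only [Finset.mem_filter, Finset.mem_Icc, Finset.mem_singleton]
        omega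
      have hk0 : (0:ℝ) < k := by
        have : 0 < k := by omega
        exact_mod_cast this
      have hval : trm s k (k/2) = (k:ℝ) ^ (-s) := by
        unfold trm
        have hc : ((k/2:ℕ):ℝ) * Real.pi / k = Real.pi / 2 := by
          have h2 : (2:ℝ) * ((k/2:ℕ):ℝ) = (k:ℝ) := by exact_mod_cast h.2
          field_simp
          linear_combination h2
        rw [hc, Real.sin_pi_div_two, Real.one_rpow, mul_one]
      rw [hM]
      simp only [hset, Finset.sum_singleton, hval]
      exact ⟨le_refl _, Real.rpow_nonneg hk0.le _⟩
    · have hset : (Finset.Icc 1 (k-1)).filter (fun j => 2 * j = k) = ∅ := by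
        ext j
        simp only [Finset.mem_filter, Finset.mem_Icc, Finset.notMem_empty, iff_false]
        omega
      rw [hM]
      simp only [hset, Finset.sum_empty]
      exact ⟨Real.rpow_nonneg (Nat.cast_nonneg k) _, le_refl _⟩
  have hM0 : Tendsto M atTop (𝓝 0) := by
    apply squeeze_zero (fun k => (hMle k).2) (fun k => (hMle k).1)
    have := (tendsto_rpow_neg_atTop hs0).comp tendsto_natCast_atTop_atTop
    exact this
  -- assemble
  have hcomb := (hG.const_mul 2).add hM0
  rw [add_zero] at hcomb
  have hfun : (fun k : ℕ =>
      (k:ℝ) ^ (-s) * ∑ j ∈ Finset.Icc 1 (k-1), Real.sin ((j:ℝ) * Real.pi / k) ^ (-s))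
      = fun k => 2 * ∑' n, f k n + M k := funext key
  rw [hfun]
  have hlim : 2 * ∑' n : ℕ, (((n:ℝ)+1) * Real.pi) ^ (-s)
      = 2 * Real.pi ^ (-s) * ∑' n : ℕ, ((n:ℝ)+1) ^ (-s) := by
    have heq : ∀ n : ℕ, (((n:ℝ)+1) * Real.pi) ^ (-s)
        = ((n:ℝ)+1) ^ (-s) * Real.pi ^ (-s) := fun n =>
      Real.mul_rpow (by positivity) Real.pi_pos.le
    rw [tsum_congr heq, tsum_mul_right]
    ring
  rw [← hlim]
  exact hcomb
end

section
/- For every real s > 1 there exist constants c > 0 and C > 0, depending only on s, such that for all integers k ≥ 2 and all h̄ ∈ (0, 1/√2], one has c (h̄^{−s} + k h̄^{1−s}) ≤ ∑_{j=1}^{k} ((1−h̄²) sin²((j−1)π/k) + h̄²)^{−s/2} ≤ C (h̄^{−s} + k h̄^{1−s}). -/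
open Real

set_option maxHeartbeats 1000000

private lemma mvt_step (s a h : ℝ) (hs : 1 < s) (ha : 0 < a) (hh : 0 < h)
    (x : ℝ) (hx : 0 ≤ x) :
    a * (s - 1) * (a * (x + 1) + h) ^ (-s) ≤
      (a * x + h) ^ (1 - s) - (a * (x + 1) + h) ^ (1 - s) := by
  set F : ℝ → ℝ := fun t => (a * t + h) ^ (1 - s) with hF
  have hpos : ∀ t : ℝ, 0 ≤ t → 0 < a * t + h := fun t ht => by positivity
  have hderiv : ∀ t ∈ Set.Ioo x (x + 1),
      HasDerivAt F (a * (1 - s) * (a * t + h) ^ (-s)) t := by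
    intro t ht
    have h1 : HasDerivAt (fun t : ℝ => a * t + h) a t := by
      simpa using ((hasDerivAt_id t).const_mul a).add_const h
    have h2 := h1.rpow_const (p := 1 - s) (Or.inl (ne_of_gt (hpos t (hx.trans ht.1.le))))
    rw [show (1:ℝ) - s - 1 = -s by ring] at h2
    simpa [mul_comm, mul_assoc, mul_left_comm] using h2
  have hcont : ContinuousOn F (Set.Icc x (x + 1)) :=
    (((continuous_const.mul continuous_id).add continuous_const).continuousOn).rpow_const
      (fun t ht => Or.inl (ne_of_gt (hpos t (hx.trans ht.1))))
  obtain ⟨c, hc, hceq⟩ :=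
    exists_hasDerivAt_eq_slope F _ (by linarith : x < x + 1) hcont hderiv
  rw [show x + 1 - x = 1 by ring, div_one] at hceq
  have hcpos : 0 < a * c + h := hpos c (hx.trans hc.1.le)
  have hmono : (a * (x + 1) + h) ^ (-s) ≤ (a * c + h) ^ (-s) :=
    Real.rpow_le_rpow_of_nonpos hcpos (by nlinarith [hc.2]) (by linarith)
  have hneg : a * (1 - s) ≤ 0 := by nlinarith
  have hmul := mul_le_mul_of_nonpos_left hmono hneg
  have hring : a * (1 - s) * ((a * (x + 1) + h) ^ (-s))
      = -(a * (s - 1) * ((a * (x + 1) + h) ^ (-s))) := by ring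
  simp only [hF] at hceq
  linarith [hceq ▸ hmul]

private lemma tail_sum (s a h : ℝ) (hs : 1 < s) (ha : 0 < a) (hh : 0 < h) (k : ℕ) :
    ∑ i ∈ Finset.range k, (a * ((i : ℝ) + 1) + h) ^ (-s) ≤ h ^ (1 - s) / (a * (s - 1)) := by
  have hpos : 0 < a * (s - 1) := by nlinarith
  rw [le_div_iff₀ hpos]
  calc (∑ i ∈ Finset.range k, (a * ((i : ℝ) + 1) + h) ^ (-s)) * (a * (s - 1))
      = ∑ i ∈ Finset.range k, a * (s - 1) * (a * ((i : ℝ) + 1) + h) ^ (-s) := by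
        rw [Finset.sum_mul]; exact Finset.sum_congr rfl fun i _ => by ring
    _ ≤ ∑ i ∈ Finset.range k,
          ((a * (i : ℝ) + h) ^ (1 - s) - (a * ((i : ℝ) + 1) + h) ^ (1 - s)) :=
        Finset.sum_le_sum fun i _ => mvt_step s a h hs ha hh i (Nat.cast_nonneg i)
    _ = (a * ((0 : ℕ) : ℝ) + h) ^ (1 - s) - (a * (k : ℝ) + h) ^ (1 - s) := by
        have := Finset.sum_range_sub' (fun i : ℕ => (a * (i : ℝ) + h) ^ (1 - s)) k
        simp only [Nat.cast_add, Nat.cast_one] at this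
        exact this
    _ ≤ h ^ (1 - s) := by
        have h1 : (0 : ℝ) ≤ (a * (k : ℝ) + h) ^ (1 - s) := Real.rpow_nonneg (by positivity) _
        simp only [Nat.cast_zero, mul_zero, zero_add]
        linarith


theorem stmt15 (s : ℝ) (hs : 1 < s) :
    ∃ c > (0:ℝ), ∃ C > (0:ℝ), ∀ (k : ℕ), 2 ≤ k →
      ∀ h : ℝ, 0 < h → h ≤ 1 / Real.sqrt 2 →
      c * (h ^ (-s) + k * h ^ (1-s)) ≤
        (∑ j ∈ Finset.Icc 1 k,
          ((1 - h^2) * Real.sin (((j:ℝ)-1) * Real.pi / k) ^ 2 + h^2) ^ (-s/2)) ∧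
      (∑ j ∈ Finset.Icc 1 k,
          ((1 - h^2) * Real.sin (((j:ℝ)-1) * Real.pi / k) ^ 2 + h^2) ^ (-s/2)) ≤
        C * (h ^ (-s) + k * h ^ (1-s)) := by
  have hs1 : (0:ℝ) < s - 1 := by linarith
  have h2s : (0:ℝ) < 2 ^ s := Real.rpow_pos_of_pos two_pos s
  have h2s1 : (1:ℝ) ≤ 2 ^ s := by
    calc (1:ℝ) = 2 ^ (0:ℝ) := (Real.rpow_zero 2).symm
    _ ≤ 2 ^ s := Real.rpow_le_rpow_of_exponent_le one_le_two (by linarith)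
  have hπ := Real.pi_pos
  have hπ1 := Real.one_le_pi_div_two
  have hπ1' : (1:ℝ) ≤ π := by nlinarith
  refine ⟨(2 * π * 2 ^ s)⁻¹, by positivity, 2 ^ s * (2 + 1 / (s - 1)), ?_, ?_⟩
  · have : (0:ℝ) < 1 / (s-1) := by positivity
    have : (0:ℝ) < 2 + 1 / (s-1) := by linarith
    positivity
  intro k hk h hh hh2
  have hk0 : (0:ℝ) < k := by exact_mod_cast (by omega : 0 < k)
  have hsq2 : Real.sqrt 2 > 0 := by positivity
  have hh1 : h ^ 2 ≤ 1 / 2 := by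
    have h1 : (1 / Real.sqrt 2 : ℝ) ^ 2 = 1 / 2 := by
      rw [div_pow, one_pow, Real.sq_sqrt (by norm_num : (0:ℝ) ≤ 2)]
    nlinarith
  have hhl1 : h < 1 := by nlinarith
  -- basic objects
  set θ : ℕ → ℝ := fun i => i * π / k with hθdef
  set D : ℕ → ℝ := fun i => (1 - h^2) * Real.sin (θ i) ^ 2 + h^2 with hDdef
  set u : ℕ → ℝ := fun i => Real.sin (θ i) + h with hudef
  have hθ0 : ∀ i : ℕ, 0 ≤ θ i := fun i => by positivity
  have hθπ : ∀ i : ℕ, i ≤ k → θ i ≤ π := by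
    intro i hi
    have : (i:ℝ) ≤ k := by exact_mod_cast hi
    rw [hθdef]
    rw [div_le_iff₀ hk0]
    nlinarith
  have hsin0 : ∀ i : ℕ, i ≤ k → 0 ≤ Real.sin (θ i) := fun i hi =>
    Real.sin_nonneg_of_nonneg_of_le_pi (hθ0 i) (hθπ i hi)
  have hu0 : ∀ i : ℕ, i ≤ k → 0 < u i := by
    intro i hi; have := hsin0 i hi; simp only [hudef]; linarith
  have hD0 : ∀ i : ℕ, 0 < D i := by
    intro i
    have h1 : 0 ≤ Real.sin (θ i) ^ 2 := sq_nonneg _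
    have : (0:ℝ) < 1 - h^2 := by nlinarith
    simp only [hDdef]; nlinarith
  have hsq : ∀ v : ℝ, 0 ≤ v → (v ^ 2) ^ (-s/2) = v ^ (-s) := by
    intro v hv
    rw [← Real.rpow_natCast v 2, ← Real.rpow_mul hv]
    congr 1
    push_cast
    ring
  -- comparison of D-terms with u-terms
  have tu_le : ∀ i : ℕ, i ≤ k → u i ^ (-s) ≤ D i ^ (-s/2) := by
    intro i hi
    have hsi := hsin0 i hi
    have hDu : D i ≤ u i ^ 2 := by simp only [hDdef, hudef]; nlinarith
    have := Real.rpow_le_rpow_of_nonpos (hD0 i) hDu (by linarith : -s/2 ≤ 0)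
    rwa [hsq _ (hu0 i hi).le] at this
  have tD_le : ∀ i : ℕ, i ≤ k → D i ^ (-s/2) ≤ 2 ^ s * u i ^ (-s) := by
    intro i hi
    have hsi := hsin0 i hi
    have hui := hu0 i hi
    have hDu : (u i / 2) ^ 2 ≤ D i := by
      simp only [hDdef, hudef]
      nlinarith [sq_nonneg (Real.sin (θ i) - h), sq_nonneg (Real.sin (θ i)),
        mul_nonneg (by linarith : (0:ℝ) ≤ 1/2 - h^2) (sq_nonneg (Real.sin (θ i)))]
    have h1 : 0 < (u i / 2) ^ 2 := by positivity
    have h2 := Real.rpow_le_rpow_of_nonpos h1 hDu (by linarith : -s/2 ≤ 0)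
    rw [hsq _ (by positivity : (0:ℝ) ≤ u i / 2)] at h2
    have h3 : (u i / 2) ^ (-s) = 2 ^ s * u i ^ (-s) := by
      rw [Real.div_rpow hui.le (by norm_num : (0:ℝ) ≤ 2),
        Real.rpow_neg (by norm_num : (0:ℝ) ≤ 2), division_def, inv_inv, mul_comm]
    rw [h3] at h2
    exact h2
  -- rewrite the sum
  have hS : (∑ j ∈ Finset.Icc 1 k,
        ((1 - h^2) * Real.sin (((j:ℝ)-1) * Real.pi / k) ^ 2 + h^2) ^ (-s/2))
      = ∑ i ∈ Finset.range k, D i ^ (-s/2) := by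
    rw [← Finset.Ico_add_one_right_eq_Icc, Finset.sum_Ico_eq_sum_range]
    refine Finset.sum_congr rfl fun i _ => ?_
    simp only [hDdef, hθdef]
    push_cast
    ring_nf
  set T : ℝ := ∑ i ∈ Finset.range k, u i ^ (-s) with hTdef
  have hTS : T ≤ ∑ i ∈ Finset.range k, D i ^ (-s/2) :=
    Finset.sum_le_sum fun i hi => tu_le i (Finset.mem_range.mp hi).le
  have hST : (∑ i ∈ Finset.range k, D i ^ (-s/2)) ≤ 2 ^ s * T := by
    rw [Finset.mul_sum]
    exact Finset.sum_le_sum fun i hi => tD_le i (Finset.mem_range.mp hi).le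
  have hu0eq : u 0 = h := by simp [hudef, hθdef]
  have hpow1s : h ^ (1-s) = h * h ^ (-s) := by
    rw [show (1:ℝ) - s = 1 + (-s) by ring, Real.rpow_add hh, Real.rpow_one]
  have hhs : (0:ℝ) < h ^ (-s) := Real.rpow_pos_of_pos hh _
  rw [hS]
  constructor
  · -- lower bound
    have key : h ^ (-s) + k * h ^ (1-s) ≤ 2 * π * 2 ^ s * T := by
      rcases le_or_gt (h * k) 1 with hcase | hcase
      · have hT0 : h ^ (-s) ≤ T := by
          have := Finset.single_le_sum (f := fun i => u i ^ (-s))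
            (fun i hi => (Real.rpow_nonneg (hu0 i (Finset.mem_range.mp hi).le).le _))
            (Finset.mem_range.mpr (by omega : 0 < k))
          rw [hTdef]
          simpa [hu0eq] using this
        have hk1 : (k:ℝ) * h ^ (1-s) ≤ h ^ (-s) := by
          rw [hpow1s]
          calc (k:ℝ) * (h * h^(-s)) = (h * k) * h^(-s) := by ring
          _ ≤ 1 * h^(-s) := mul_le_mul_of_nonneg_right hcase hhs.le
          _ = h^(-s) := one_mul _
        have hP : (1:ℝ) ≤ π * 2^s :=
          calc (1:ℝ) = 1*1 := by norm_num
            _ ≤ π * 2^s := mul_le_mul hπ1' h2s1 zero_le_one (by linarith)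
        have hT0' : (0:ℝ) < T := lt_of_lt_of_le hhs hT0
        have hPT : 1*T ≤ (π*2^s)*T := mul_le_mul_of_nonneg_right hP hT0'.le
        linarith [hPT, hT0, hk1]
      · set N := ⌊h * k / π⌋₊ with hN
        have hNle : (N:ℝ) ≤ h * k / π := Nat.floor_le (by positivity)
        have hNlt : h * k / π < N + 1 := Nat.lt_floor_add_one _
        have hNk : N < k := by
          rw [hN]
          exact (Nat.floor_lt (by positivity)).mpr
            (by rw [div_lt_iff₀ hπ]; nlinarith)
        have hsub : Finset.range (N+1) ⊆ Finset.range k :=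
          Finset.range_subset_range.mpr (by omega)
        have hterm : ∀ i ∈ Finset.range (N+1), (2*h)^(-s) ≤ u i ^ (-s) := by
          intro i hi
          have hiN : (i:ℝ) ≤ N := by
            exact_mod_cast Nat.lt_succ_iff.mp (Finset.mem_range.mp hi)
          have hik : i ≤ k := by
            have := Finset.mem_range.mp hi; omega
          have hθh : θ i ≤ h := by
            rw [hθdef]
            rw [div_le_iff₀ hk0]
            have h5 : (i:ℝ) ≤ h*k/π := hiN.trans hNle
            rw [le_div_iff₀ hπ] at h5
            linarith
          have hsle : Real.sin (θ i) ≤ θ i := Real.sin_le (hθ0 i)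
          have hle2 : u i ≤ 2*h := by simp only [hudef]; linarith
          exact Real.rpow_le_rpow_of_nonpos (hu0 i hik) hle2 (by linarith)
        have hcard : ((N:ℝ)+1) * (2*h)^(-s) ≤ ∑ i ∈ Finset.range (N+1), u i ^ (-s) := by
          have := Finset.card_nsmul_le_sum (Finset.range (N+1))
            (fun i => u i ^ (-s)) ((2*h)^(-s)) hterm
          rw [Finset.card_range, nsmul_eq_mul] at this
          exact_mod_cast this
        have hTge : (h*k/π) * (2*h)^(-s) ≤ T := by
          refine le_trans ?_ (le_trans hcard
            (Finset.sum_le_sum_of_subset_of_nonneg hsub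
              (fun i hi _ => Real.rpow_nonneg (hu0 i (Finset.mem_range.mp hi).le).le _)))
          exact mul_le_mul_of_nonneg_right hNlt.le (Real.rpow_nonneg (by linarith) _)
        have h2h : (2*h)^(-s) = h^(-s) / 2^s := by
          rw [Real.mul_rpow (by norm_num : (0:ℝ) ≤ 2) hh.le,
            Real.rpow_neg (by norm_num : (0:ℝ) ≤ 2)]
          ring
        rw [h2h] at hTge
        have e0 : (h*(k:ℝ))*h^(-s) = π*2^s*((h*k/π)*(h^(-s)/2^s)) := by
          field_simp
        have e1 : (k:ℝ) * h^(1-s) ≤ π*2^s*T := by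
          rw [hpow1s, show (k:ℝ)*(h*h^(-s)) = (h*(k:ℝ))*h^(-s) by ring, e0]
          exact mul_le_mul_of_nonneg_left hTge (by positivity)
        have e2 : h^(-s) ≤ (k:ℝ)*h^(1-s) := by
          rw [hpow1s]
          nlinarith
        linarith [e1, e2]
    rw [inv_mul_le_iff₀ (by positivity)]
    calc h ^ (-s) + k * h ^ (1-s) ≤ 2*π*2^s*T := key
      _ ≤ 2*π*2^s * ∑ i ∈ Finset.range k, D i ^ (-s/2) :=
          mul_le_mul_of_nonneg_left hTS (by positivity)
  · -- upper bound
    set g : ℕ → ℝ := fun n => (2*(n:ℝ)/k + h)^(-s) with hg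
    have hg0 : ∀ n, 0 ≤ g n := fun n => Real.rpow_nonneg (by positivity) _
    have hgpt : ∀ i ∈ Finset.range k, u i ^ (-s) ≤ g i + g (k - i) := by
      intro i hi
      have hik : i < k := Finset.mem_range.mp hi
      rcases le_or_gt (2*i) k with hcase | hcase
      · have h2i : (2*(i:ℝ)) ≤ k := by exact_mod_cast hcase
        have hθ2 : θ i ≤ π/2 := by
          rw [hθdef, div_le_iff₀ hk0]
          nlinarith
        have hj : 2/π * θ i ≤ Real.sin (θ i) := Real.mul_le_sin (hθ0 i) hθ2
        have hje : 2/π * θ i = 2*(i:ℝ)/k := by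
          rw [hθdef]; field_simp
        have hsin : 2*(i:ℝ)/k ≤ Real.sin (θ i) := by rw [← hje]; exact hj
        have hgi : u i ^ (-s) ≤ g i := by
          apply Real.rpow_le_rpow_of_nonpos (by positivity)
            (by simp only [hudef]; linarith) (by linarith)
        linarith [hg0 (k-i)]
      · have hm : (((k - i : ℕ)):ℝ) = (k:ℝ) - i := by
          rw [Nat.cast_sub hik.le]
        have hsinπ : Real.sin (θ i) = Real.sin (θ (k-i)) := by
          rw [hθdef]
          simp only
          rw [← Real.sin_pi_sub]
          congr 1
          rw [hm]
          field_simp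
        have h2i : (k:ℝ) < 2*(i:ℝ) := by exact_mod_cast hcase
        have hθ2 : θ (k-i) ≤ π/2 := by
          rw [hθdef]
          simp only
          rw [div_le_iff₀ hk0, hm]
          nlinarith
        have hj : 2/π * θ (k-i) ≤ Real.sin (θ (k-i)) := Real.mul_le_sin (hθ0 _) hθ2
        have hje : 2/π * θ (k-i) = 2*(((k-i:ℕ)):ℝ)/k := by
          rw [hθdef]; field_simp
        have hsin : 2*(((k-i:ℕ)):ℝ)/k ≤ Real.sin (θ i) := by
          rw [hsinπ, ← hje]; exact hj
        have hgi : u i ^ (-s) ≤ g (k-i) := by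
          apply Real.rpow_le_rpow_of_nonpos (by positivity)
            (by simp only [hudef]; linarith) (by linarith)
        linarith [hg0 i]
    have hT2 : T ≤ (∑ i ∈ Finset.range k, g i) + ∑ i ∈ Finset.range k, g (k - i) := by
      rw [← Finset.sum_add_distrib]
      exact Finset.sum_le_sum hgpt
    have hrefl : (∑ i ∈ Finset.range k, g (k - i)) = ∑ j ∈ Finset.range k, g (j+1) := by
      rw [← Finset.sum_range_reflect (fun j => g (j+1)) k]
      refine Finset.sum_congr rfl fun i hi => ?_
      have hik : i < k := Finset.mem_range.mp hi
      have : k - 1 - i + 1 = k - i := by omega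
      rw [this]
    have hsum1 : (∑ i ∈ Finset.range k, g i) ≤ g 0 + ∑ j ∈ Finset.range k, g (j+1) := by
      have h1 := Finset.sum_range_succ' g k
      have hsub : ∑ i ∈ Finset.range k, g i ≤ ∑ i ∈ Finset.range (k+1), g i :=
        Finset.sum_le_sum_of_subset_of_nonneg (Finset.range_subset_range.mpr (by omega))
          (fun i _ _ => hg0 i)
      rw [h1] at hsub
      linarith
    have htail : (∑ j ∈ Finset.range k, g (j+1)) ≤ (k:ℝ) * h^(1-s) / (2*(s-1)) := by
      have ha : (0:ℝ) < 2/(k:ℝ) := by positivity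
      have h1 := tail_sum s (2/(k:ℝ)) h hs ha hh k
      have heq : ∀ j:ℕ, g (j+1) = ((2/(k:ℝ)) * ((j:ℝ)+1) + h)^(-s) := by
        intro j
        simp only [hg]
        push_cast
        ring_nf
      calc (∑ j ∈ Finset.range k, g (j+1))
          = ∑ j ∈ Finset.range k, ((2/(k:ℝ))*((j:ℝ)+1)+h)^(-s) :=
            Finset.sum_congr rfl fun j _ => heq j
        _ ≤ h^(1-s) / ((2/(k:ℝ))*(s-1)) := h1
        _ = (k:ℝ)*h^(1-s)/(2*(s-1)) := by
            rw [div_eq_div_iff (by positivity) (by positivity)]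
            field_simp
    have hg00 : g 0 = h^(-s) := by simp [hg]
    have hTfin : T ≤ h^(-s) + (k:ℝ)*h^(1-s)/(s-1) := by
      rw [hrefl] at hT2
      have h2' : (k:ℝ)*h^(1-s)/(s-1) = 2*((k:ℝ)*h^(1-s)/(2*(s-1))) := by
        field_simp
      linarith [hT2, hsum1, htail, hg00, h2']
    have hB : (0:ℝ) ≤ (k:ℝ)*h^(1-s) := by positivity
    have ht : (0:ℝ) < 1/(s-1) := by positivity
    calc (∑ i ∈ Finset.range k, D i ^ (-s/2)) ≤ 2^s * T := hST
      _ ≤ 2^s * (h^(-s) + (k:ℝ)*h^(1-s)/(s-1)) := mul_le_mul_of_nonneg_left hTfin h2s.le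
      _ ≤ 2^s*(2+1/(s-1))*(h^(-s)+(k:ℝ)*h^(1-s)) := by
          rw [mul_assoc]
          refine mul_le_mul_of_nonneg_left ?_ h2s.le
          have hne : s - 1 ≠ 0 := ne_of_gt hs1
          have expand : (2 + 1/(s-1)) * (h^(-s)+(k:ℝ)*h^(1-s))
              = (h^(-s) + (k:ℝ)*h^(1-s)/(s-1))
                + (h^(-s) + 2*((k:ℝ)*h^(1-s)) + h^(-s)*(1/(s-1))) := by
            field_simp
            ring
          linarith [hB, (mul_pos hhs ht).le, hhs, expand]
end
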